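/- Let f be a slice function on Ω_D ⊂ ℍⁿ such that f maps the slice D_I into ℂ_I^n for some imaginary unit I. Then for every α, β ∈ ℝⁿ with α + iβ ∈ D, the maximum of ‖f(α + Jβ)‖ over all imaginary units J equals max{‖f(α + Iβ)‖, ‖f(α - Iβ)‖}, and the minimum over all imaginary units J equals min{‖f(α + Iβ)‖, ‖f(α - Iβ)‖}. -/

import Mathlib

/-! Write `F₁ = a + bI` and `F₂ = c + dI` componentwise. For an imaginary unit `J`,
`|a + bI + J(c + dI)|² = a² + b² + c² + d² + 2(bc - ad)⟪I, J⟫`, so `‖f(α + Jβ)‖²` is an affine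
function of `⟪I, J⟫ ∈ [-1, 1]`, whose extreme values are attained at `J = I` and `J = -I`. -/

open Quaternion
open scoped RealInnerProductSpace

lemma Set.add_mul_mem_uIcc {A B u : ℝ} (hu : u ∈ Set.Icc (-1) 1) :
    A + B * u ∈ Set.uIcc (A + B) (A - B) := by
  obtain ⟨hu₁, hu₂⟩ := hu
  rcases le_total 0 B with hB | hB
  · exact Set.mem_uIcc.2 (Or.inr ⟨by nlinarith, by nlinarith⟩)
  · exact Set.mem_uIcc.2 (Or.inl ⟨by nlinarith, by nlinarith⟩)

lemma isGreatest_isLeast_image_of_forall_mem_uIcc {X α : Type*} [LinearOrder α] {s : Set X}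
    {g : X → α} {x₁ x₂ : X} (h₁ : x₁ ∈ s) (h₂ : x₂ ∈ s)
    (hg : ∀ x ∈ s, g x ∈ Set.uIcc (g x₁) (g x₂)) :
    IsGreatest (g '' s) (max (g x₁) (g x₂)) ∧ IsLeast (g '' s) (min (g x₁) (g x₂)) := by
  refine ⟨⟨?_, ?_⟩, ⟨?_, ?_⟩⟩
  · rcases max_choice (g x₁) (g x₂) with h | h <;> rw [h] <;> exact Set.mem_image_of_mem g ‹_›
  · rintro _ ⟨x, hx, rfl⟩
    exact (hg x hx).2
  · rcases min_choice (g x₁) (g x₂) with h | h <;> rw [h] <;> exact Set.mem_image_of_mem g ‹_›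
  · rintro _ ⟨x, hx, rfl⟩
    exact (hg x hx).1

namespace Quaternion

variable {I J : ℍ}

lemma normSq_eq_one_of_sq_eq_neg_one (hJ : J ^ 2 = -1) : normSq J = 1 := by
  have h : normSq J ^ 2 = 1 := by rw [← map_pow, hJ, normSq_neg, map_one]
  exact (pow_eq_one_iff_of_nonneg normSq_nonneg two_ne_zero).1 h

lemma re_eq_zero_of_sq_eq_neg_one (hJ : J ^ 2 = -1) : J.re = 0 :=
  sq_eq_neg_normSq.1 (by rw [hJ, normSq_eq_one_of_sq_eq_neg_one hJ, coe_one])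

lemma norm_eq_one_of_sq_eq_neg_one (hJ : J ^ 2 = -1) : ‖J‖ = 1 := by
  rw [norm_eq_sqrt_real_inner, inner_self, normSq_eq_one_of_sq_eq_neg_one hJ, Real.sqrt_one]

lemma real_inner_mem_Icc_of_sq_eq_neg_one (hI : I ^ 2 = -1) (hJ : J ^ 2 = -1) :
    ⟪I, J⟫ ∈ Set.Icc (-1) 1 := by
  have := abs_real_inner_le_norm I J
  rw [norm_eq_one_of_sq_eq_neg_one hI, norm_eq_one_of_sq_eq_neg_one hJ, one_mul] at this
  exact abs_le.1 this

lemma normSq_add_mul_of_sq_eq_neg_one (hI : I ^ 2 = -1) (hJ : J ^ 2 = -1) (a b c d : ℝ) :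
    normSq ((a : ℍ) + (b : ℍ) * I + J * ((c : ℍ) + (d : ℍ) * I)) =
      a ^ 2 + b ^ 2 + c ^ 2 + d ^ 2 + 2 * (b * c - a * d) * ⟪I, J⟫ := by
  have hIn := normSq_eq_one_of_sq_eq_neg_one hI
  have hJn := normSq_eq_one_of_sq_eq_neg_one hJ
  rw [normSq_def'] at hIn hJn
  simp only [normSq_def', inner_def, re_add, imI_add, imJ_add, imK_add, re_mul, imI_mul, imJ_mul,
    imK_mul, re_coe, imI_coe, imJ_coe, imK_coe, re_star, imI_star, imJ_star, imK_star,
    re_eq_zero_of_sq_eq_neg_one hI, re_eq_zero_of_sq_eq_neg_one hJ] at hIn hJn ⊢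
  linear_combination (b ^ 2 + d ^ 2) * hIn +
    (c ^ 2 + d ^ 2 * (I.imI ^ 2 + I.imJ ^ 2 + I.imK ^ 2)) * hJn

lemma exists_sum_norm_sq_add_mul_eq_add_mul_inner {ι : Type*} [Fintype ι] (hI : I ^ 2 = -1)
    {p q : ι → ℍ} (hp : ∀ t, ∃ x y : ℝ, p t = (x : ℍ) + (y : ℍ) * I)
    (hq : ∀ t, ∃ x y : ℝ, q t = (x : ℍ) + (y : ℍ) * I) :
    ∃ A B : ℝ, ∀ J : ℍ, J ^ 2 = -1 → ∑ t, ‖p t + J * q t‖ ^ 2 = A + B * ⟪I, J⟫ := by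
  choose a b hab using hp
  choose c d hcd using hq
  refine ⟨∑ t, (a t ^ 2 + b t ^ 2 + c t ^ 2 + d t ^ 2), ∑ t, 2 * (b t * c t - a t * d t),
    fun J hJ => ?_⟩
  rw [Finset.sum_mul, ← Finset.sum_add_distrib]
  refine Finset.sum_congr rfl fun t _ => ?_
  rw [sq, ← normSq_eq_norm_mul_self, hab, hcd, normSq_add_mul_of_sq_eq_neg_one hI hJ]

end Quaternion

theorem stmt8_general (n : ℕ) (D : Set (Fin n → ℂ))
    (F₁ F₂ : (Fin n → ℂ) → (Fin n → Quaternion ℝ))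
    (f : Quaternion ℝ → (Fin n → ℂ) → (Fin n → Quaternion ℝ))
    (hf : ∀ (L : Quaternion ℝ) (z : Fin n → ℂ) (t : Fin n),
      f L z t = F₁ z t + L * F₂ z t)
    (I : Quaternion ℝ) (hI : I ^ 2 = -1)
    (hrange : ∀ z ∈ D, ∀ t,
      (∃ x y : ℝ, F₁ z t = (x : Quaternion ℝ) + (y : Quaternion ℝ) * I) ∧
      (∃ x y : ℝ, F₂ z t = (x : Quaternion ℝ) + (y : Quaternion ℝ) * I))
    (α β : Fin n → ℝ)
    (hz : (fun t => (α t : ℂ) + (β t : ℂ) * Complex.I) ∈ D) :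
    IsGreatest
      {r : ℝ | ∃ J : Quaternion ℝ, J ^ 2 = -1 ∧
        r = Real.sqrt (∑ t, ‖f J (fun t => (α t : ℂ) + (β t : ℂ) * Complex.I) t‖ ^ 2)}
      (max (Real.sqrt (∑ t, ‖f I (fun t => (α t : ℂ) + (β t : ℂ) * Complex.I) t‖ ^ 2))
           (Real.sqrt (∑ t, ‖f (-I) (fun t => (α t : ℂ) + (β t : ℂ) * Complex.I) t‖ ^ 2)))
    ∧
    IsLeast
      {r : ℝ | ∃ J : Quaternion ℝ, J ^ 2 = -1 ∧
        r = Real.sqrt (∑ t, ‖f J (fun t => (α t : ℂ) + (β t : ℂ) * Complex.I) t‖ ^ 2)}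
      (min (Real.sqrt (∑ t, ‖f I (fun t => (α t : ℂ) + (β t : ℂ) * Complex.I) t‖ ^ 2))
           (Real.sqrt (∑ t, ‖f (-I) (fun t => (α t : ℂ) + (β t : ℂ) * Complex.I) t‖ ^ 2))) := by
  set z : Fin n → ℂ := fun t => (α t : ℂ) + (β t : ℂ) * Complex.I
  obtain ⟨A, B, hAB⟩ := exists_sum_norm_sq_add_mul_eq_add_mul_inner hI
    (fun t => (hrange z hz t).1) (fun t => (hrange z hz t).2)
  have hnorm : ∀ J : ℍ, J ^ 2 = -1 → √(∑ t, ‖f J z t‖ ^ 2) = √(A + B * ⟪I, J⟫) := by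
    intro J hJ
    simp only [hf, hAB J hJ]
  have hI_neg : (-I) ^ 2 = -1 := by rw [neg_sq, hI]
  have hII : ⟪I, I⟫ = 1 := by
    rw [real_inner_self_eq_norm_sq, norm_eq_one_of_sq_eq_neg_one hI, one_pow]
  have hvalues : {r : ℝ | ∃ J : ℍ, J ^ 2 = -1 ∧ r = √(∑ t, ‖f J z t‖ ^ 2)} =
      (fun J => √(∑ t, ‖f J z t‖ ^ 2)) '' {J | J ^ 2 = -1} := by
    ext r
    simp only [Set.mem_ofPred_eq, Set.mem_image, eq_comm]
  rw [hvalues]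
  refine isGreatest_isLeast_image_of_forall_mem_uIcc hI hI_neg fun J hJ => ?_
  rw [hnorm J hJ, hnorm I hI, hnorm (-I) hI_neg, inner_neg_right, hII, mul_one, mul_neg_one,
    ← sub_eq_add_neg]
  exact Real.sqrt_monotone.mapsTo_uIcc
    (Set.add_mul_mem_uIcc (real_inner_mem_Icc_of_sq_eq_neg_one hI hJ))

/-- max/min lemma: Let `f` be the slice function on `Ω_D ⊂ ℍⁿ` induced by an
even-odd stem pair `(F₁, F₂)`, and suppose `f` maps the slice `D_I` into `ℂ_I^n` (i.e. the
values `F₁ z, F₂ z` have all components in `ℝ + ℝI`) for some imaginary unit `I`. Then for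
`α, β ∈ ℝⁿ` with `α + iβ ∈ D`, the maximum of `‖f(α + Jβ)‖` over all imaginary units `J` is
`max {‖f(α + Iβ)‖, ‖f(α - Iβ)‖}` and the minimum is `min {‖f(α + Iβ)‖, ‖f(α - Iβ)‖}`,
where `‖x‖ = (Σₜ |xₜ|²)^(1/2)`. -/
theorem stmt8 (n : ℕ) (D : Set (Fin n → ℂ))
    (hD : ∀ z ∈ D, (fun t => (starRingEnd ℂ) (z t)) ∈ D)
    (F₁ F₂ : (Fin n → ℂ) → (Fin n → Quaternion ℝ))
    (heven : ∀ z ∈ D, F₁ (fun t => (starRingEnd ℂ) (z t)) = F₁ z)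
    (hodd : ∀ z ∈ D, F₂ (fun t => (starRingEnd ℂ) (z t)) = -F₂ z)
    (f : Quaternion ℝ → (Fin n → ℂ) → (Fin n → Quaternion ℝ))
    (hf : ∀ (L : Quaternion ℝ) (z : Fin n → ℂ) (t : Fin n),
      f L z t = F₁ z t + L * F₂ z t)
    (I : Quaternion ℝ) (hI : I ^ 2 = -1)
    (hrange : ∀ z ∈ D, ∀ t,
      (∃ x y : ℝ, F₁ z t = (x : Quaternion ℝ) + (y : Quaternion ℝ) * I) ∧
      (∃ x y : ℝ, F₂ z t = (x : Quaternion ℝ) + (y : Quaternion ℝ) * I))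
    (α β : Fin n → ℝ)
    (hz : (fun t => (α t : ℂ) + (β t : ℂ) * Complex.I) ∈ D) :
    IsGreatest
      {r : ℝ | ∃ J : Quaternion ℝ, J ^ 2 = -1 ∧
        r = Real.sqrt (∑ t, ‖f J (fun t => (α t : ℂ) + (β t : ℂ) * Complex.I) t‖ ^ 2)}
      (max (Real.sqrt (∑ t, ‖f I (fun t => (α t : ℂ) + (β t : ℂ) * Complex.I) t‖ ^ 2))
           (Real.sqrt (∑ t, ‖f (-I) (fun t => (α t : ℂ) + (β t : ℂ) * Complex.I) t‖ ^ 2)))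
    ∧
    IsLeast
      {r : ℝ | ∃ J : Quaternion ℝ, J ^ 2 = -1 ∧
        r = Real.sqrt (∑ t, ‖f J (fun t => (α t : ℂ) + (β t : ℂ) * Complex.I) t‖ ^ 2)}
      (min (Real.sqrt (∑ t, ‖f I (fun t => (α t : ℂ) + (β t : ℂ) * Complex.I) t‖ ^ 2))
           (Real.sqrt (∑ t, ‖f (-I) (fun t => (α t : ℂ) + (β t : ℂ) * Complex.I) t‖ ^ 2))) :=
  stmt8_general n D F₁ F₂ f hf I hI hrange α β hz
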